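/- Let f be a 1-periodic piecewise-linear function, injective and monotone on [0,1), with ℓ pieces whose slopes have μ distinct magnitudes, and suppose the slopes of the first piece f₁ and last piece f_ℓ are equal. Then for all α ∈ ℝ and N ∈ ℕ, |G_{f,α,N}| ≤ 3μ + ℓ - 1; in particular, the extremal gap length of f equals an interior gap length whenever the maximal number of interior gap lengths occurs. -/

import Mathlib

/-- The set of distinct values `f (d*α + β)` for `1 ≤ d ≤ N`. -/
def orbitSet (f : ℝ → ℝ) (α β : ℝ) (N : ℕ) : Set ℝ :=
  {y | ∃ d : ℕ, 1 ≤ d ∧ d ≤ N ∧ y = f (d * α + β)}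

/-- Gaps between consecutive (nearest-neighbor) elements of a set of reals. -/
def consGaps (S : Set ℝ) : Set ℝ :=
  {g | ∃ a ∈ S, ∃ b ∈ S, a < b ∧ (∀ x ∈ S, x ≤ a ∨ b ≤ x) ∧ g = b - a}

/-- The gap length set `G_{f,α,β,N}`: consecutive gaps together with the
extremal gap `s₁ - inf f + sup f - s_n`. -/
def gapSet (f : ℝ → ℝ) (α β : ℝ) (N : ℕ) : Set ℝ :=
  consGaps (orbitSet f α β N) ∪
    {sInf (orbitSet f α β N) - sInf (Set.range f) + sSup (Set.range f) -
      sSup (orbitSet f α β N)}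

/-!
Write `D = {d α mod 1 | 1 ≤ d ≤ N} ⊆ [0, 1)`. By periodicity the orbit is `f '' D`, and after
replacing `f` by `-f` (which does not change the gap set) `f` is strictly increasing on
`[0, 1)`. Hence the consecutive gaps of the orbit are the images `f v - f u` of consecutive
gaps `(u, v]` of `D`, and the extremal gap is the image of the gap `(max D, min D + 1]` across
`0`. These arcs partition the circle `(0, 1]`.

An arc containing none of the breakpoints `t 1, …, t (ℓ - 1)` lies in a single piece, so its
image is `|m p|` times its length; for the arc across `0` the two slopes involved are
`m 0 = m (ℓ - 1)`. By the three gap theorem the arc lengths take at most three values, giving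
at most `3 μ` such gap lengths. The arcs are disjoint, so each breakpoint lies in at most one
of them and the remaining arcs give at most `ℓ - 1` gap lengths.

For the three gap theorem, write `x_d = d α mod 1` and shift a pair `x_i → x_j` of circular
neighbours down to `x_{i-1} → x_{j-1}`: it stays a pair of neighbours unless `x_N` falls in
between, in which case the gap splits into the two gaps around `x_N`. Descending to `i = 1` or
`j = 1`, every gap length is the gap after `x_1`, the gap before `x_1`, or the sum of the two
gaps around `x_N`.
-/

open Set

section Consecutive

variable {β : Type*} [LinearOrder β]

def IsConsecutive (S : Set β) (a b : β) : Prop :=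
  a ∈ S ∧ b ∈ S ∧ a < b ∧ ∀ x ∈ S, x ≤ a ∨ b ≤ x

theorem IsConsecutive.eq_of_mem_Ioc {S : Set β} {a b a' b' y : β} (h : IsConsecutive S a b)
    (h' : IsConsecutive S a' b') (hy : y ∈ Ioc a b) (hy' : y ∈ Ioc a' b') :
    a = a' ∧ b = b' := by
  have hle : ∀ {a b a' b'}, IsConsecutive S a b → IsConsecutive S a' b' → y ∈ Ioc a b →
      y ∈ Ioc a' b' → a' ≤ a ∧ b ≤ b' := fun h h' hy hy' =>
    ⟨(h.2.2.2 _ h'.1).resolve_right (hy'.1.trans_le hy.2).not_ge,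
      (h.2.2.2 _ h'.2.1).resolve_left (hy.1.trans_le hy'.2).not_ge⟩
  obtain ⟨h₁, h₂⟩ := hle h h' hy hy'
  obtain ⟨h₃, h₄⟩ := hle h' h hy' hy
  exact ⟨le_antisymm h₃ h₁, le_antisymm h₂ h₄⟩

theorem IsConsecutive.of_image {γ : Type*} [LinearOrder γ] {f : β → γ} {s S : Set β}
    (hf : StrictMonoOn f s) (hS : S ⊆ s) {x y : γ} (h : IsConsecutive (f '' S) x y) :
    ∃ a b, IsConsecutive S a b ∧ x = f a ∧ y = f b := by
  obtain ⟨⟨a, ha, rfl⟩, ⟨b, hb, rfl⟩, hab, hcons⟩ := h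
  refine ⟨a, b, ⟨ha, hb, (hf.lt_iff_lt (hS ha) (hS hb)).1 hab, fun w hw => ?_⟩, rfl, rfl⟩
  exact (hcons _ ⟨w, hw, rfl⟩).imp (hf.le_iff_le (hS hw) (hS ha)).1
    (hf.le_iff_le (hS hb) (hS hw)).1

theorem IsConsecutive.neg {G : Type*} [AddCommGroup G] [LinearOrder G] [IsOrderedAddMonoid G]
    {S : Set G} {a b : G} (h : IsConsecutive S a b) : IsConsecutive (-S) (-b) (-a) := by
  obtain ⟨ha, hb, hab, hcons⟩ := h
  refine ⟨by simpa, by simpa, neg_lt_neg hab, fun x hx => ?_⟩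
  rcases hcons (-x) hx with h | h
  · exact Or.inr (neg_le.1 h)
  · exact Or.inl (le_neg_of_le_neg h)

def IsArcValue {γ : Type*} (S : Set β) (a b : β) (φ : β → β → γ) (X : γ) (y : β) (x : γ) :
    Prop :=
  (∃ u v, IsConsecutive S u v ∧ y ∈ Ioc u v ∧ x = φ u v) ∨ ((y ≤ a ∨ b < y) ∧ x = X)

/-- The arcs `(u, v]` between consecutive points of `S` and the complement of `(a, b]` are
disjoint, so a point `y` lies in at most one of them. -/
theorem subsingleton_isArcValue {γ : Type*} {S : Set β} {a b : β} (ha : a ∈ lowerBounds S)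
    (hb : b ∈ upperBounds S) (φ : β → β → γ) (X : γ) (y : β) :
    {x | IsArcValue S a b φ X y x}.Subsingleton := by
  have hmid : ∀ {u v}, IsConsecutive S u v → y ∈ Ioc u v → ¬(y ≤ a ∨ b < y) :=
    fun h hy hout => by
      have := ha h.1
      have := hb h.2.1
      rcases hout with h' | h' <;> order [hy.1, hy.2]
  rintro _ (⟨u, v, huv, hy, rfl⟩ | ⟨hy, rfl⟩) _ (⟨u', v', huv', hy', rfl⟩ | ⟨hy', rfl⟩)
  · obtain ⟨rfl, rfl⟩ := huv.eq_of_mem_Ioc huv' hy hy'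
    rfl
  · exact absurd hy' (hmid huv hy)
  · exact absurd hy (hmid huv' hy')
  · rfl

end Consecutive

theorem Set.Subsingleton.exists_subset_singleton {β : Type*} [Nonempty β] {s : Set β}
    (hs : s.Subsingleton) : ∃ a, s ⊆ {a} := by
  rcases s.eq_empty_or_nonempty with rfl | ⟨a, ha⟩
  · exact ⟨Classical.arbitrary β, empty_subset _⟩
  · exact ⟨a, fun x hx => hs hx ha⟩

theorem exists_finset_card_le_forall_of_subsingleton {ι β : Type*} [Nonempty β] (B : Finset ι)
    (R : ι → β → Prop) (hR : ∀ i, {x | R i x}.Subsingleton) :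
    ∃ W : Finset β, W.card ≤ B.card ∧ ∀ i ∈ B, ∀ x, R i x → x ∈ W := by
  classical
  choose w hw using fun i => (hR i).exists_subset_singleton
  exact ⟨B.image w, Finset.card_image_le,
    fun i hi x hx => Finset.mem_image.2 ⟨i, hi, (hw i hx).symm⟩⟩

section ToIocMod

variable {p : ℝ} (hp : 0 < p) {a b : ℝ}

theorem toIocMod_zero_sub_of_lt (h : toIocMod hp 0 b < toIocMod hp 0 a) :
    toIocMod hp 0 (a - b) = toIocMod hp 0 a - toIocMod hp 0 b := by
  have ha := toIocMod_mem_Ioc hp 0 a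
  have hb := toIocMod_mem_Ioc hp 0 b
  refine (toIocMod_eq_iff hp).2 ⟨⟨by linarith, by linarith [ha.2, hb.1]⟩,
    toIocDiv hp 0 a - toIocDiv hp 0 b, ?_⟩
  conv_lhs => rw [← toIocMod_add_toIocDiv_zsmul hp 0 a, ← toIocMod_add_toIocDiv_zsmul hp 0 b]
  rw [sub_zsmul]
  abel

theorem toIocMod_zero_sub_of_le (h : toIocMod hp 0 a ≤ toIocMod hp 0 b) :
    toIocMod hp 0 (a - b) = toIocMod hp 0 a - toIocMod hp 0 b + p := by
  have ha := toIocMod_mem_Ioc hp 0 a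
  have hb := toIocMod_mem_Ioc hp 0 b
  refine (toIocMod_eq_iff hp).2 ⟨⟨by linarith [ha.1, hb.2], by linarith⟩,
    toIocDiv hp 0 a - toIocDiv hp 0 b - 1, ?_⟩
  conv_lhs => rw [← toIocMod_add_toIocDiv_zsmul hp 0 a, ← toIocMod_add_toIocDiv_zsmul hp 0 b]
  rw [sub_zsmul, sub_zsmul, one_zsmul]
  abel

theorem toIocMod_zero_add_of_le (h : toIocMod hp 0 a + toIocMod hp 0 b ≤ p) :
    toIocMod hp 0 (a + b) = toIocMod hp 0 a + toIocMod hp 0 b := by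
  have ha := toIocMod_mem_Ioc hp 0 a
  have hb := toIocMod_mem_Ioc hp 0 b
  refine (toIocMod_eq_iff hp).2 ⟨⟨by linarith [ha.1, hb.1], by linarith⟩,
    toIocDiv hp 0 a + toIocDiv hp 0 b, ?_⟩
  conv_lhs => rw [← toIocMod_add_toIocDiv_zsmul hp 0 a, ← toIocMod_add_toIocDiv_zsmul hp 0 b]
  rw [add_zsmul]
  abel

theorem toIocMod_zero_sub_of_mem_Ico {x y : ℝ} (hx : x ∈ Ico 0 p) (hy : y ∈ Ico 0 p) :
    toIocMod hp 0 (y - x) = if x < y then y - x else y - x + p := by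
  split_ifs with hxy
  · exact (toIocMod_eq_self hp).2 ⟨by linarith, by linarith [hy.2, hx.1]⟩
  · refine (toIocMod_eq_iff hp).2 ⟨⟨by linarith [hx.2, hy.1], by linarith [hy.2, hx.1]⟩, -1, ?_⟩
    rw [neg_one_zsmul]
    abel

end ToIocMod

/-- `fwdDist α (j - i) ∈ (0, 1]` is the counterclockwise distance on `ℝ / ℤ` from `i α` to
`j α`; it is `1`, not `0`, when the two points coincide. -/
noncomputable def fwdDist (α : ℝ) (k : ℤ) : ℝ := toIocMod zero_lt_one 0 (k * α)

section FwdDist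

variable {α : ℝ} {k l : ℤ}

theorem fwdDist_mem_Ioc (α : ℝ) (k : ℤ) : fwdDist α k ∈ Ioc 0 1 := by
  simpa [fwdDist] using toIocMod_mem_Ioc zero_lt_one 0 (k * α)

@[simp] theorem fwdDist_zero (α : ℝ) : fwdDist α 0 = 1 := by
  simp [fwdDist, toIocMod_apply_left]

theorem fwdDist_sub_of_lt (h : fwdDist α l < fwdDist α k) :
    fwdDist α (k - l) = fwdDist α k - fwdDist α l := by
  simpa [fwdDist, sub_mul] using toIocMod_zero_sub_of_lt zero_lt_one h

theorem fwdDist_sub_of_le (h : fwdDist α k ≤ fwdDist α l) :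
    fwdDist α (k - l) = fwdDist α k - fwdDist α l + 1 := by
  simpa [fwdDist, sub_mul] using toIocMod_zero_sub_of_le zero_lt_one h

theorem fwdDist_add_of_le (h : fwdDist α k + fwdDist α l ≤ 1) :
    fwdDist α (k + l) = fwdDist α k + fwdDist α l := by
  simpa [fwdDist, add_mul] using toIocMod_zero_add_of_le zero_lt_one h

theorem fwdDist_neg_of_lt_one (h : fwdDist α k < 1) : fwdDist α (-k) = 1 - fwdDist α k := by
  simpa using fwdDist_sub_of_lt (k := 0) (l := k) (by simpa using h)

theorem fwdDist_sub_eq_toIocMod_fract_sub (α : ℝ) (i e : ℤ) :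
    fwdDist α (e - i) = toIocMod zero_lt_one 0 (Int.fract (e * α) - Int.fract (i * α)) := by
  refine (toIocMod_eq_toIocMod _).2 ⟨⌊(i : ℝ) * α⌋ - ⌊(e : ℝ) * α⌋, ?_⟩
  simp only [Int.fract, zsmul_one]
  push_cast
  ring

end FwdDist

def IsCircSucc (α : ℝ) (N : ℕ) (i j : ℤ) : Prop :=
  i ∈ Icc 1 (N : ℤ) ∧ j ∈ Icc 1 (N : ℤ) ∧
    ∀ e ∈ Icc 1 (N : ℤ), fwdDist α (j - i) ≤ fwdDist α (e - i)

namespace IsCircSucc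

variable {α : ℝ} {N : ℕ} {i i' j j' : ℤ}

theorem fwdDist_eq_of_left (h : IsCircSucc α N i j) (h' : IsCircSucc α N i j') :
    fwdDist α (j - i) = fwdDist α (j' - i) :=
  le_antisymm (h.2.2 j' h'.2.1) (h'.2.2 j h.2.1)

/-- If `x_i ≠ x_i'`, the one of them closer to the common successor `x_j` would lie strictly
between the other one and `x_j`. -/
theorem fwdDist_eq_of_right (h : IsCircSucc α N i j) (h' : IsCircSucc α N i' j) :
    fwdDist α (j - i) = fwdDist α (j - i') := by
  have hji : fwdDist α (j - i) ≤ fwdDist α (i' - i) := h.2.2 i' h'.1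
  have hji' : fwdDist α (j - i') = fwdDist α (j - i) - fwdDist α (i' - i) + 1 := by
    rw [show j - i' = (j - i) - (i' - i) by ring]
    exact fwdDist_sub_of_le hji
  have hii' : fwdDist α (i' - i) = 1 := by
    by_contra hne
    have hlt : fwdDist α (i' - i) < 1 := lt_of_le_of_ne (fwdDist_mem_Ioc α _).2 hne
    have hmin := h'.2.2 i h.1
    rw [show i - i' = -(i' - i) by ring, fwdDist_neg_of_lt_one hlt, hji'] at hmin
    linarith [(fwdDist_mem_Ioc α (j - i)).1]
  rw [hji', hii']
  ring

theorem sub_one_or_split (hi : 2 ≤ i) (hj : 2 ≤ j) (h : IsCircSucc α N i j) :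
    IsCircSucc α N (i - 1) (j - 1) ∨
      (IsCircSucc α N (i - 1) N ∧ IsCircSucc α N N (j - 1) ∧
        fwdDist α (j - i) = fwdDist α (N - (i - 1)) + fwdDist α (j - 1 - N)) := by
  obtain ⟨⟨-, hiN⟩, ⟨-, hjN⟩, hmin⟩ := h
  have hi₁ : i - 1 ∈ Icc 1 (N : ℤ) := ⟨by omega, by omega⟩
  have hj₁ : j - 1 ∈ Icc 1 (N : ℤ) := ⟨by omega, by omega⟩
  have hN : (N : ℤ) ∈ Icc 1 (N : ℤ) := ⟨by omega, le_rfl⟩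
  have hshift : ∀ e ∈ Icc 1 (N : ℤ), e ≠ N → fwdDist α (j - i) ≤ fwdDist α (e - (i - 1)) :=
    fun e ⟨he₁, he₂⟩ hne => by
      simpa [show e + 1 - i = e - (i - 1) by ring] using hmin (e + 1) ⟨by omega, by omega⟩
  obtain ⟨-, hg₁⟩ := fwdDist_mem_Ioc α (j - i)
  rcases le_or_gt (fwdDist α (j - i)) (fwdDist α (N - (i - 1))) with hle | hlt
  · refine Or.inl ⟨hi₁, hj₁, fun e he => ?_⟩
    rw [show j - 1 - (i - 1) = j - i by ring]
    obtain rfl | hne := eq_or_ne e N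
    · exact hle
    · exact hshift e he hne
  · have hsplit : fwdDist α (j - 1 - N) = fwdDist α (j - i) - fwdDist α (N - (i - 1)) := by
      rw [show j - 1 - N = (j - i) - (N - (i - 1)) by ring]
      exact fwdDist_sub_of_lt hlt
    refine Or.inr ⟨⟨hi₁, hN, fun e he => ?_⟩, ⟨hN, hj₁, fun e he => ?_⟩, by rw [hsplit]; ring⟩
    · obtain rfl | hne := eq_or_ne e N
      · exact le_rfl
      · exact hlt.le.trans (hshift e he hne)
    · rw [hsplit]
      obtain rfl | hne := eq_or_ne e N
      · rw [sub_self, fwdDist_zero]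
        linarith [(fwdDist_mem_Ioc α (N - (i - 1))).1]
      · by_contra! hcontra
        have hsum : fwdDist α (e - (i - 1)) = fwdDist α (N - (i - 1)) + fwdDist α (e - N) := by
          rw [show e - (i - 1) = (N - (i - 1)) + (e - N) by ring]
          exact fwdDist_add_of_le (by linarith)
        linarith [hshift e he hne]

theorem fwdDist_eq_at_one_or_across_last (h : IsCircSucc α N i j) :
    (∃ j', IsCircSucc α N 1 j' ∧ fwdDist α (j - i) = fwdDist α (j' - 1)) ∨
      (∃ i', IsCircSucc α N i' 1 ∧ fwdDist α (j - i) = fwdDist α (1 - i')) ∨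
      (∃ p q, IsCircSucc α N p N ∧ IsCircSucc α N N q ∧
        fwdDist α (j - i) = fwdDist α (N - p) + fwdDist α (q - N)) := by
  induction i, h.1.1 using Int.leInduction generalizing j with
  | base => exact Or.inl ⟨j, h, rfl⟩
  | succ n hn ih =>
    obtain rfl | hj := eq_or_ne j 1
    · exact Or.inr (Or.inl ⟨n + 1, h, rfl⟩)
    have hj₂ : 2 ≤ j := by have := h.2.1.1; omega
    rcases h.sub_one_or_split (by omega) hj₂ with h' | ⟨hp, hq, heq⟩
    · simp only [add_sub_cancel_right] at h'
      rw [show j - (n + 1) = j - 1 - n by ring]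
      exact ih h'
    · exact Or.inr (Or.inr ⟨_, _, hp, hq, by simpa using heq⟩)

end IsCircSucc

theorem exists_finset_card_le_three_forall_isCircSucc (α : ℝ) (N : ℕ) :
    ∃ T : Finset ℝ, T.card ≤ 3 ∧ ∀ i j, IsCircSucc α N i j → fwdDist α (j - i) ∈ T := by
  obtain ⟨a, ha⟩ := Set.Subsingleton.exists_subset_singleton
    (s := {x | ∃ j, IsCircSucc α N 1 j ∧ x = fwdDist α (j - 1)})
    (by rintro _ ⟨j, hj, rfl⟩ _ ⟨j', hj', rfl⟩; exact hj.fwdDist_eq_of_left hj')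
  obtain ⟨b, hb⟩ := Set.Subsingleton.exists_subset_singleton
    (s := {x | ∃ i, IsCircSucc α N i 1 ∧ x = fwdDist α (1 - i)})
    (by rintro _ ⟨i, hi, rfl⟩ _ ⟨i', hi', rfl⟩; exact hi.fwdDist_eq_of_right hi')
  obtain ⟨c, hc⟩ := Set.Subsingleton.exists_subset_singleton
    (s := {x | ∃ p q, IsCircSucc α N p N ∧ IsCircSucc α N N q ∧
      x = fwdDist α (N - p) + fwdDist α (q - N)})
    (by
      rintro _ ⟨p, q, hp, hq, rfl⟩ _ ⟨p', q', hp', hq', rfl⟩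
      rw [hp.fwdDist_eq_of_right hp', hq.fwdDist_eq_of_left hq'])
  refine ⟨{a, b, c}, Finset.card_le_three, fun i j h => ?_⟩
  rcases h.fwdDist_eq_at_one_or_across_last with ⟨j', hj', heq⟩ | ⟨i', hi', heq⟩ |
    ⟨p, q, hp, hq, heq⟩
  · simp [mem_singleton_iff.1 (ha ⟨j', hj', heq⟩)]
  · simp [mem_singleton_iff.1 (hb ⟨i', hi', heq⟩)]
  · simp [mem_singleton_iff.1 (hc ⟨p, q, hp, hq, heq⟩)]

noncomputable def fractOrbit (α : ℝ) (N : ℕ) : Finset ℝ :=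
  (Finset.Icc (1 : ℤ) N).image fun d : ℤ => Int.fract (d * α)

section FractOrbit

variable {α : ℝ} {N : ℕ}

theorem mem_fractOrbit {u : ℝ} :
    u ∈ fractOrbit α N ↔ ∃ d ∈ Icc 1 (N : ℤ), Int.fract (d * α) = u := by
  simp [fractOrbit]

theorem fractOrbit_subset_Ico : ↑(fractOrbit α N) ⊆ Ico (0 : ℝ) 1 := by
  intro u hu
  obtain ⟨d, -, rfl⟩ := mem_fractOrbit.1 hu
  exact ⟨Int.fract_nonneg _, Int.fract_lt_one _⟩

theorem exists_isCircSucc_of_forall_le {u w : ℝ} (hu : u ∈ fractOrbit α N)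
    (hw : w ∈ fractOrbit α N)
    (hmin : ∀ y ∈ fractOrbit α N,
      toIocMod zero_lt_one 0 (w - u) ≤ toIocMod zero_lt_one 0 (y - u)) :
    ∃ i j, IsCircSucc α N i j ∧ toIocMod zero_lt_one 0 (w - u) = fwdDist α (j - i) := by
  obtain ⟨i, hi, rfl⟩ := mem_fractOrbit.1 hu
  obtain ⟨j, hj, rfl⟩ := mem_fractOrbit.1 hw
  refine ⟨i, j, ⟨hi, hj, fun e he => ?_⟩, (fwdDist_sub_eq_toIocMod_fract_sub α i j).symm⟩
  rw [fwdDist_sub_eq_toIocMod_fract_sub, fwdDist_sub_eq_toIocMod_fract_sub]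
  exact hmin _ (mem_fractOrbit.2 ⟨e, he, rfl⟩)

theorem exists_finset_card_le_three_gaps_fractOrbit (α : ℝ) (N : ℕ) :
    ∃ T : Finset ℝ, T.card ≤ 3 ∧
      (∀ u v, IsConsecutive ↑(fractOrbit α N) u v → v - u ∈ T) ∧
      ∀ h : (fractOrbit α N).Nonempty,
        (fractOrbit α N).min' h + 1 - (fractOrbit α N).max' h ∈ T := by
  obtain ⟨T, hT, hmem⟩ := exists_finset_card_le_three_forall_isCircSucc α N
  have hD : ∀ {y}, y ∈ fractOrbit α N → y ∈ Ico (0 : ℝ) 1 := fun hy => fractOrbit_subset_Ico hy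
  refine ⟨T, hT, fun u v ⟨hu, hv, huv, hcons⟩ => ?_, fun h => ?_⟩
  · obtain ⟨i, j, hij, heq⟩ := exists_isCircSucc_of_forall_le hu hv fun y hy => by
      rw [toIocMod_zero_sub_of_mem_Ico _ (hD hu) (hD hv),
        toIocMod_zero_sub_of_mem_Ico _ (hD hu) (hD hy), if_pos huv]
      split_ifs with huy
      · rcases hcons y hy with hyu | hvy
        · exact absurd hyu huy.not_ge
        · linarith
      · linarith [(hD hv).2, (hD hy).1]
    rw [toIocMod_zero_sub_of_mem_Ico _ (hD hu) (hD hv), if_pos huv] at heq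
    exact heq ▸ hmem i j hij
  · have hmax := (fractOrbit α N).max'_mem h
    have hmin := (fractOrbit α N).min'_mem h
    obtain ⟨i, j, hij, heq⟩ := exists_isCircSucc_of_forall_le hmax hmin fun y hy => by
      rw [toIocMod_zero_sub_of_mem_Ico _ (hD hmax) (hD hmin),
        toIocMod_zero_sub_of_mem_Ico _ (hD hmax) (hD hy),
        if_neg ((fractOrbit α N).min'_le _ hmax).not_gt,
        if_neg ((fractOrbit α N).le_max' _ hy).not_gt]
      linarith [(fractOrbit α N).min'_le _ hy]
    rw [toIocMod_zero_sub_of_mem_Ico _ (hD hmax) (hD hmin),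
      if_neg ((fractOrbit α N).min'_le _ hmax).not_gt, sub_add_eq_add_sub] at heq
    exact heq ▸ hmem i j hij

end FractOrbit

theorem mem_consGaps {S : Set ℝ} {g : ℝ} :
    g ∈ consGaps S ↔ ∃ a b, IsConsecutive S a b ∧ g = b - a := by
  simp only [consGaps, IsConsecutive, Set.mem_ofPred_eq]
  constructor
  · rintro ⟨a, ha, b, hb, hab, hcons, rfl⟩
    exact ⟨a, b, ⟨ha, hb, hab, hcons⟩, rfl⟩
  · rintro ⟨a, b, ⟨ha, hb, hab, hcons⟩, rfl⟩
    exact ⟨a, ha, b, hb, hab, hcons, rfl⟩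

theorem consGaps_neg (S : Set ℝ) : consGaps (-S) = consGaps S := by
  have hsub : ∀ S : Set ℝ, consGaps S ⊆ consGaps (-S) := fun S g hg => by
    obtain ⟨a, b, hab, rfl⟩ := mem_consGaps.1 hg
    exact mem_consGaps.2 ⟨-b, -a, hab.neg, by ring⟩
  exact (hsub S).antisymm' (by simpa using hsub (-S))

theorem gapSet_neg (f : ℝ → ℝ) (α β : ℝ) (N : ℕ) : gapSet (-f) α β N = gapSet f α β N := by
  have horbit : orbitSet (-f) α β N = -orbitSet f α β N := by
    ext y
    simp only [orbitSet, Pi.neg_apply, Set.mem_ofPred_eq, Set.mem_neg, neg_eq_iff_eq_neg]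
  have hrange : range (-f) = -range f := by
    ext y
    simp [neg_eq_iff_eq_neg]
  rw [gapSet, gapSet, horbit, hrange, consGaps_neg, Real.sInf_neg, Real.sInf_neg, Real.sSup_neg,
    Real.sSup_neg]
  congr 2
  ring

theorem orbitSet_eq_image_fractOrbit {f : ℝ → ℝ} (hper : Function.Periodic f 1) (α : ℝ)
    (N : ℕ) : orbitSet f α 0 N = f '' ↑(fractOrbit α N) := by
  have hfract : ∀ x, f (Int.fract x) = f x := fun x => by
    rw [Int.fract]
    simpa using hper.sub_int_mul_eq (x := x) ⌊x⌋
  ext y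
  simp only [orbitSet, add_zero, Set.mem_ofPred_eq, Set.mem_image, Finset.mem_coe,
    mem_fractOrbit]
  constructor
  · rintro ⟨d, hd₁, hdN, rfl⟩
    exact ⟨_, ⟨d, ⟨by exact_mod_cast hd₁, by exact_mod_cast hdN⟩, rfl⟩, by simp [hfract]⟩
  · rintro ⟨_, ⟨d, ⟨hd₁, hdN⟩, rfl⟩, rfl⟩
    lift d to ℕ using by omega
    exact ⟨d, by exact_mod_cast hd₁, by exact_mod_cast hdN, by simp [hfract]⟩

theorem Function.Periodic.isLeast_range {f : ℝ → ℝ} (hper : Function.Periodic f 1)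
    (hmono : MonotoneOn f (Ico 0 1)) : IsLeast (range f) (f 0) := by
  refine ⟨mem_range_self 0, ?_⟩
  rintro _ ⟨x, rfl⟩
  obtain ⟨y, hy, hxy⟩ := hper.exists_mem_Ico₀ one_pos x
  rw [hxy]
  exact hmono ⟨le_rfl, one_pos⟩ hy hy.1

theorem gapSet_subset_of_strictMonoOn {f : ℝ → ℝ} (hper : Function.Periodic f 1)
    (hmono : StrictMonoOn f (Ico 0 1)) {M : ℝ} (hM : IsLUB (range f) M) {α : ℝ} {N : ℕ}
    (hD : (fractOrbit α N).Nonempty) :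
    gapSet f α 0 N ⊆ {x | ∃ u v, IsConsecutive ↑(fractOrbit α N) u v ∧ x = f v - f u} ∪
      {f ((fractOrbit α N).min' hD) - f 0 + (M - f ((fractOrbit α N).max' hD))} := by
  have hsub := fractOrbit_subset_Ico (α := α) (N := N)
  rw [gapSet, orbitSet_eq_image_fractOrbit hper]
  refine union_subset_union (fun x hx => ?_) (subset_of_eq ?_)
  · obtain ⟨a, b, hab, rfl⟩ := mem_consGaps.1 hx
    obtain ⟨u, v, huv, rfl, rfl⟩ := hab.of_image hmono hsub
    exact ⟨u, v, huv, rfl⟩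
  · have hmin : IsLeast (f '' ↑(fractOrbit α N)) (f ((fractOrbit α N).min' hD)) :=
      ⟨mem_image_of_mem f ((fractOrbit α N).min'_mem hD), by
        rintro _ ⟨y, hy, rfl⟩
        exact hmono.monotoneOn (hsub ((fractOrbit α N).min'_mem hD)) (hsub hy)
          ((fractOrbit α N).min'_le y hy)⟩
    have hmax : IsGreatest (f '' ↑(fractOrbit α N)) (f ((fractOrbit α N).max' hD)) :=
      ⟨mem_image_of_mem f ((fractOrbit α N).max'_mem hD), by
        rintro _ ⟨y, hy, rfl⟩
        exact hmono.monotoneOn (hsub hy) (hsub ((fractOrbit α N).max'_mem hD))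
          ((fractOrbit α N).le_max' y hy)⟩
    rw [hmin.csInf_eq, hmax.csSup_eq, (hper.isLeast_range hmono.monotoneOn).csInf_eq,
      hM.csSup_eq (range_nonempty f)]
    congr 1
    ring

structure PiecewiseAffine (f : ℝ → ℝ) (ℓ : ℕ) (t m c : ℕ → ℝ) : Prop where
  t_zero : t 0 = 0
  t_last : t ℓ = 1
  t_lt_succ : ∀ i < ℓ, t i < t (i + 1)
  eq_on_piece : ∀ i < ℓ, ∀ x ∈ Ico (t i) (t (i + 1)), f x = m i * x + c i

namespace PiecewiseAffine

variable {f : ℝ → ℝ} {ℓ : ℕ} {t m c : ℕ → ℝ} (hf : PiecewiseAffine f ℓ t m c)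
include hf

theorem neg : PiecewiseAffine (-f) ℓ t (-m) (-c) where
  t_zero := hf.t_zero
  t_last := hf.t_last
  t_lt_succ := hf.t_lt_succ
  eq_on_piece i hi x hx := by
    simp only [Pi.neg_apply, hf.eq_on_piece i hi x hx]
    ring

theorem length_pos : 0 < ℓ := by
  rcases Nat.eq_zero_or_pos ℓ with rfl | h
  · simpa [hf.t_zero] using hf.t_last
  · exact h

theorem strictMonoOn_t : StrictMonoOn t (Iic ℓ) :=
  strictMonoOn_Iic_of_lt_succ fun i hi => by simpa using hf.t_lt_succ i hi

theorem t_mem_Ico {p : ℕ} (hp : p < ℓ) : t p ∈ Ico 0 1 := by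
  rw [← hf.t_zero, ← hf.t_last]
  exact ⟨hf.strictMonoOn_t.monotoneOn (Nat.zero_le ℓ) hp.le (Nat.zero_le p),
    hf.strictMonoOn_t hp.le self_mem_Iic hp⟩

theorem piece_subset_Ico {p : ℕ} (hp : p < ℓ) : Ico (t p) (t (p + 1)) ⊆ Ico 0 1 := by
  refine Ico_subset_Ico (hf.t_mem_Ico hp).1 ?_
  rw [← hf.t_last]
  exact hf.strictMonoOn_t.monotoneOn (show p + 1 ≤ ℓ from hp) self_mem_Iic hp

theorem t_pred_add_one : t (ℓ - 1 + 1) = 1 := by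
  rw [Nat.sub_add_cancel (show 1 ≤ ℓ from hf.length_pos), hf.t_last]

theorem exists_piece {x : ℝ} (hx : x ∈ Ico 0 1) : ∃ p < ℓ, x ∈ Ico (t p) (t (p + 1)) := by
  have hlast : x < t (ℓ - 1 + 1) := hf.t_pred_add_one ▸ hx.2
  have hex : ∃ p, x < t (p + 1) := ⟨ℓ - 1, hlast⟩
  refine ⟨Nat.find hex, ?_, ?_, Nat.find_spec hex⟩
  · have := Nat.find_min' hex hlast
    have := hf.length_pos
    omega
  · rcases Nat.eq_zero_or_pos (Nat.find hex) with h | h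
    · rw [h, hf.t_zero]
      exact hx.1
    · have := Nat.find_min hex (Nat.sub_lt h one_pos)
      rwa [Nat.sub_add_cancel (show 1 ≤ Nat.find hex from h), not_lt] at this

theorem eq_on_last {x : ℝ} (hx : t (ℓ - 1) ≤ x) (hx' : x < 1) :
    f x = m (ℓ - 1) * x + c (ℓ - 1) :=
  hf.eq_on_piece _ (Nat.sub_lt hf.length_pos one_pos) x ⟨hx, hf.t_pred_add_one ▸ hx'⟩

theorem sub_eq_slope_mul {u v : ℝ} (hu : 0 ≤ u) (huv : u ≤ v) (hv : v < 1)
    (hbreak : ∀ k ∈ Finset.Icc 1 (ℓ - 1), t k ∉ Ioc u v) :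
    ∃ p < ℓ, t p ≤ u ∧ f v - f u = m p * (v - u) := by
  obtain ⟨p, hp, hup⟩ := hf.exists_piece ⟨hu, huv.trans_lt hv⟩
  have hvp : v < t (p + 1) := by
    by_contra! hle
    have hpℓ : p + 1 ≠ ℓ := fun h => by rw [h, hf.t_last] at hle; linarith
    exact hbreak (p + 1) (Finset.mem_Icc.2 ⟨le_add_self, by omega⟩) ⟨hup.2, hle⟩
  refine ⟨p, hp, hup.1, ?_⟩
  rw [hf.eq_on_piece p hp v ⟨hup.1.trans huv, hvp⟩, hf.eq_on_piece p hp u hup]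
  ring

theorem extremal_gap_eq {u₀ u₁ : ℝ} (hu₀ : 0 ≤ u₀) (h₀₁ : u₀ ≤ u₁) (hu₁ : u₁ < 1)
    (hbreak : ∀ k ∈ Finset.Icc 1 (ℓ - 1), u₀ < t k ∧ t k ≤ u₁) :
    f u₀ - f 0 + (m (ℓ - 1) + c (ℓ - 1) - f u₁) = m 0 * u₀ + m (ℓ - 1) * (1 - u₁) := by
  obtain ⟨p, hp, htp, hfirst⟩ := hf.sub_eq_slope_mul le_rfl hu₀ (h₀₁.trans_lt hu₁)
    fun k hk htk => (hbreak k hk).1.not_ge htk.2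
  obtain rfl : p = 0 := by
    by_contra hp0
    have := hf.strictMonoOn_t (Nat.zero_le ℓ) hp.le (Nat.pos_of_ne_zero hp0)
    linarith [hf.t_zero]
  have hlast : t (ℓ - 1) ≤ u₁ := by
    rcases Nat.eq_zero_or_pos (ℓ - 1) with h | h
    · rw [h, hf.t_zero]
      exact hu₀.trans h₀₁
    · exact (hbreak _ (Finset.mem_Icc.2 ⟨h, le_rfl⟩)).2
  rw [hf.eq_on_last hlast hu₁]
  linarith

theorem slope_pos (hmono : StrictMonoOn f (Ico 0 1)) {p : ℕ} (hp : p < ℓ) : 0 < m p := by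
  have htp := hf.t_lt_succ p hp
  have hmid : (t p + t (p + 1)) / 2 ∈ Ico (t p) (t (p + 1)) := ⟨by linarith, by linarith⟩
  have hlt := hmono (hf.t_mem_Ico hp) (hf.piece_subset_Ico hp hmid) (by linarith)
  rw [hf.eq_on_piece p hp _ ⟨le_rfl, htp⟩, hf.eq_on_piece p hp _ hmid] at hlt
  nlinarith

theorem isLUB_range (hper : Function.Periodic f 1) (hmono : StrictMonoOn f (Ico 0 1)) :
    IsLUB (range f) (m (ℓ - 1) + c (ℓ - 1)) := by
  have hL := Nat.sub_lt hf.length_pos one_pos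
  have hm := hf.slope_pos hmono hL
  have ht := hf.t_mem_Ico hL
  refine (isLUB_Ico (b := m (ℓ - 1) * t (ℓ - 1) + c (ℓ - 1)) (by nlinarith [ht.2]))
    |>.of_subset_of_superset isLUB_Iic ?_ ?_
  · rintro w ⟨hw₁, hw₂⟩
    refine ⟨(w - c (ℓ - 1)) / m (ℓ - 1), ?_⟩
    rw [hf.eq_on_last ((le_div_iff₀ hm).2 (by linarith)) ((div_lt_one hm).2 (by linarith))]
    field_simp
    ring
  · rintro _ ⟨x, rfl⟩
    obtain ⟨y, hy, hxy⟩ := hper.exists_mem_Ico₀ one_pos x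
    have hz : max y (t (ℓ - 1)) ∈ Ico 0 1 :=
      ⟨hy.1.trans (le_max_left _ _), max_lt hy.2 ht.2⟩
    calc f x = f y := hxy
      _ ≤ f (max y (t (ℓ - 1))) := hmono.monotoneOn hy hz (le_max_left _ _)
      _ = m (ℓ - 1) * max y (t (ℓ - 1)) + c (ℓ - 1) := hf.eq_on_last (le_max_right _ _) hz.2
      _ ≤ m (ℓ - 1) + c (ℓ - 1) := by nlinarith [hz.2]

theorem mem_image₂_or_isArcValue (hper : Function.Periodic f 1)
    (hmono : StrictMonoOn f (Ico 0 1)) (hslope : m 0 = m (ℓ - 1)) {α : ℝ} {N : ℕ}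
    (hD : (fractOrbit α N).Nonempty) {T : Finset ℝ}
    (hgapT : ∀ u v, IsConsecutive ↑(fractOrbit α N) u v → v - u ∈ T)
    (hwrapT : (fractOrbit α N).min' hD + 1 - (fractOrbit α N).max' hD ∈ T)
    {x : ℝ} (hx : x ∈ gapSet f α 0 N) :
    x ∈ Finset.image₂ (· * ·) ((Finset.range ℓ).image fun i => |m i|) T ∨
      ∃ k ∈ Finset.Icc 1 (ℓ - 1), IsArcValue ↑(fractOrbit α N) ((fractOrbit α N).min' hD)
        ((fractOrbit α N).max' hD) (fun u v => f v - f u)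
        (f ((fractOrbit α N).min' hD) - f 0 +
          (m (ℓ - 1) + c (ℓ - 1) - f ((fractOrbit α N).max' hD))) (t k) x := by
  have hsub := fractOrbit_subset_Ico (α := α) (N := N)
  rw [Finset.mem_image₂]
  rcases gapSet_subset_of_strictMonoOn hper hmono (hf.isLUB_range hper hmono) hD hx with
    ⟨u, v, huv, rfl⟩ | hx
  · by_cases hbreak : ∃ k ∈ Finset.Icc 1 (ℓ - 1), t k ∈ Ioc u v
    · obtain ⟨k, hk, htk⟩ := hbreak
      exact Or.inr ⟨k, hk, Or.inl ⟨u, v, huv, htk, rfl⟩⟩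
    simp only [not_exists, not_and] at hbreak
    obtain ⟨p, hp, -, heq⟩ :=
      hf.sub_eq_slope_mul (hsub huv.1).1 huv.2.2.1.le (hsub huv.2.1).2 hbreak
    refine Or.inl ⟨|m p|, Finset.mem_image_of_mem _ (Finset.mem_range.2 hp), v - u,
      hgapT u v huv, ?_⟩
    rw [heq, abs_of_pos (hf.slope_pos hmono hp)]
  · obtain rfl := mem_singleton_iff.1 hx
    set u₀ := (fractOrbit α N).min' hD
    set u₁ := (fractOrbit α N).max' hD
    by_cases hbreak : ∃ k ∈ Finset.Icc 1 (ℓ - 1), t k ≤ u₀ ∨ u₁ < t k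
    · obtain ⟨k, hk, htk⟩ := hbreak
      exact Or.inr ⟨k, hk, Or.inr ⟨htk, rfl⟩⟩
    simp only [not_exists, not_and, not_or, not_le, not_lt] at hbreak
    refine Or.inl ⟨|m 0|, Finset.mem_image_of_mem _ (Finset.mem_range.2 hf.length_pos),
      u₀ + 1 - u₁, hwrapT, ?_⟩
    rw [hf.extremal_gap_eq (hsub ((fractOrbit α N).min'_mem hD)).1
      ((fractOrbit α N).min'_le_max' hD) (hsub ((fractOrbit α N).max'_mem hD)).2 hbreak,
      ← hslope, abs_of_pos (hf.slope_pos hmono hf.length_pos)]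
    ring

theorem ncard_gapSet_le (hper : Function.Periodic f 1) (hmono : StrictMonoOn f (Ico 0 1))
    (hslope : m 0 = m (ℓ - 1)) (α : ℝ) (N : ℕ) :
    (gapSet f α 0 N).ncard ≤ 3 * ((Finset.range ℓ).image fun i => |m i|).card + ℓ - 1 := by
  classical
  set M := (Finset.range ℓ).image fun i => |m i|
  have hℓ := hf.length_pos
  have hM : 1 ≤ M.card := Finset.card_pos.2 ((Finset.nonempty_range_iff.2 hℓ.ne').image _)
  rcases (fractOrbit α N).eq_empty_or_nonempty with hD | hD
  · calc (gapSet f α 0 N).ncard ≤ 1 := by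
          rw [gapSet, orbitSet_eq_image_fractOrbit hper, hD]
          simp [consGaps]
      _ ≤ _ := by omega
  obtain ⟨T, hT, hgapT, hwrapT⟩ := exists_finset_card_le_three_gaps_fractOrbit α N
  obtain ⟨W, hW, hWmem⟩ := exists_finset_card_le_forall_of_subsingleton (β := ℝ)
    (Finset.Icc 1 (ℓ - 1)) _ fun k => subsingleton_isArcValue (a := (fractOrbit α N).min' hD)
      (b := (fractOrbit α N).max' hD) (fun x hx => (fractOrbit α N).min'_le x hx)
      (fun x hx => (fractOrbit α N).le_max' x hx) _ _ (t k)
  have hcover : gapSet f α 0 N ⊆ ↑(Finset.image₂ (· * ·) M T ∪ W) := fun x hx => by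
    rcases hf.mem_image₂_or_isArcValue hper hmono hslope hD hgapT (hwrapT hD) hx with
      hx | ⟨k, hk, hx⟩
    · exact Finset.mem_union_left _ hx
    · exact Finset.mem_union_right _ (hWmem k hk x hx)
  calc (gapSet f α 0 N).ncard ≤ (Finset.image₂ (· * ·) M T ∪ W).card := by
        rw [← Set.ncard_coe_finset]
        exact Set.ncard_le_ncard hcover (Finset.finite_toSet _)
    _ ≤ M.card * T.card + (ℓ - 1) :=
        (Finset.card_union_le _ _).trans
          (add_le_add (Finset.card_image₂_le _ _ _) (hW.trans (by simp)))
    _ ≤ 3 * M.card + ℓ - 1 := by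
        have := Nat.mul_le_mul_left M.card hT
        rw [mul_comm M.card 3] at this
        omega

end PiecewiseAffine

theorem gaps_monotone_tightened_general (f : ℝ → ℝ) (hper : ∀ x, f (x + 1) = f x)
    (ℓ : ℕ) (t m c : ℕ → ℝ)
    (ht0 : t 0 = 0) (htl : t ℓ = 1)
    (htmono : ∀ i < ℓ, t i < t (i + 1))
    (hpiece : ∀ i < ℓ, ∀ x ∈ Set.Ico (t i) (t (i + 1)), f x = m i * x + c i)
    (hinj : Set.InjOn f (Set.Ico 0 1))
    (hmono : MonotoneOn f (Set.Ico (0 : ℝ) 1) ∨ AntitoneOn f (Set.Ico (0 : ℝ) 1))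
    (hslope : m 0 = m (ℓ - 1))
    (μ : ℕ) (hμ : μ = (Finset.image (fun i => |m i|) (Finset.range ℓ)).card)
    (α : ℝ) (N : ℕ) :
    (gapSet f α 0 N).ncard ≤ 3 * μ + ℓ - 1 := by
  have hf : PiecewiseAffine f ℓ t m c := ⟨ht0, htl, htmono, hpiece⟩
  subst hμ
  rcases hmono with hmono | hanti
  · exact hf.ncard_gapSet_le hper (hmono.strictMonoOn_of_injOn hinj) hslope α N
  · rw [← gapSet_neg]
    simpa using hf.neg.ncard_gapSet_le (fun x => by simp [hper x])
      (hanti.strictAntiOn_of_injOn hinj).neg (by simp [hslope]) α N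

/-- Tightened bound for monotone injective piecewise-linear functions whose
first and last pieces have equal slopes: `|G_{f,α,N}| ≤ 3μ + ℓ - 1`. -/
theorem gaps_monotone_tightened (f : ℝ → ℝ) (hper : ∀ x, f (x + 1) = f x)
    (ℓ : ℕ) (hl : 0 < ℓ) (t m c : ℕ → ℝ)
    (ht0 : t 0 = 0) (htl : t ℓ = 1)
    (htmono : ∀ i < ℓ, t i < t (i + 1))
    (hpiece : ∀ i < ℓ, ∀ x ∈ Set.Ico (t i) (t (i + 1)), f x = m i * x + c i)
    (hmax : ∀ i, i + 1 < ℓ → (m i, c i) ≠ (m (i + 1), c (i + 1)))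
    (hinj : Set.InjOn f (Set.Ico 0 1))
    (hmono : MonotoneOn f (Set.Ico (0 : ℝ) 1) ∨ AntitoneOn f (Set.Ico (0 : ℝ) 1))
    (hslope : m 0 = m (ℓ - 1))
    (μ : ℕ) (hμ : μ = (Finset.image (fun i => |m i|) (Finset.range ℓ)).card)
    (α : ℝ) (N : ℕ) :
    (gapSet f α 0 N).ncard ≤ 3 * μ + ℓ - 1 :=
  gaps_monotone_tightened_general f hper ℓ t m c ht0 htl htmono hpiece hinj hmono hslope μ hμ α N
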